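/- Let f ~ GP prior with joint covariance K over training inputs X and a test input x, and let y = f_X + ε with ε ~ N(0, σ²I) independent. Then the random function defined by pathwise conditioning, (f|y)(x) = f(x) + K_{xX}(K_{XX} + σ²I)⁻¹(y - (f_X + ε')), with (f(x), f_X) jointly Gaussian with the prior covariance and ε' ~ N(0, σ²I) independent of f, has distribution N(K_{xX}(K_{XX}+σ²I)⁻¹y, K_{xx} - K_{xX}(K_{XX}+σ²I)⁻¹K_{Xx}), matching the exact GP posterior at x. -/

import Mathlib

/-!
The pathwise sample is an affine function of the jointly Gaussian vector `(f(x), f_X, ε')`: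
writing `u = (K_{XX} + σ²I)⁻¹ K_{Xx}`, it equals `u ⬝ y + (f(x) - u ⬝ f_X - u ⬝ ε')`. The
second summand is a linear functional of the prior, hence centred Gaussian with variance
`K_{xx} - 2 u ⬝ K_{Xx} + u ⬝ (K_{XX} + σ²I) u = K_{xx} - K_{xX} u`, and adding the constant
`u ⬝ y` shifts its mean.
-/

open MeasureTheory ProbabilityTheory Matrix

lemma ProbabilityTheory.HasLaw.of_map_eq {Ω 𝓧 : Type*} {mΩ : MeasurableSpace Ω}
    {m𝓧 : MeasurableSpace 𝓧} {P : Measure Ω} {μ : Measure 𝓧} [NeZero μ] {X : Ω → 𝓧}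
    (h : P.map X = μ) : HasLaw X μ P :=
  ⟨aemeasurable_of_map_neZero (h ▸ inferInstance), h⟩

namespace Matrix

variable {n α : Type*} [Fintype n]

lemma IsSymm.dotProduct_mulVec_comm [CommSemiring α] {A : Matrix n n α} (hA : A.IsSymm)
    (k v : n → α) : k ⬝ᵥ (A *ᵥ v) = (A *ᵥ k) ⬝ᵥ v := by
  rw [dotProduct_mulVec, ← mulVec_transpose, hA.eq]

lemma dotProduct_add_smul_one_mulVec [CommRing α] [DecidableEq n] (A : Matrix n n α) (c : α)
    (u : n → α) : u ⬝ᵥ ((A + c • 1) *ᵥ u) = u ⬝ᵥ (A *ᵥ u) + c * (u ⬝ᵥ u) := by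
  rw [add_mulVec, dotProduct_add, smul_mulVec, one_mulVec, dotProduct_smul, smul_eq_mul]

lemma mulVec_nonsing_inv_mulVec [CommRing α] [DecidableEq n] {M : Matrix n n α}
    (hM : IsUnit M) (k : n → α) : M *ᵥ (M⁻¹ *ᵥ k) = k := by
  rw [mulVec_mulVec, mul_nonsing_inv M ((isUnit_iff_isUnit_det M).mp hM), one_mulVec]

end Matrix

theorem pathwise_conditioning_general {n : ℕ} {Ω : Type*} [MeasureSpace Ω]
    (fx : Ω → ℝ) (fX : Ω → Fin n → ℝ) (eps : Ω → Fin n → ℝ)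
    (Kxx : ℝ) (KxX : Fin n → ℝ) (KXX : Matrix (Fin n) (Fin n) ℝ)
    (hKXX : KXX.PosSemidef) (σ : ℝ) (hσ : 0 < σ)
    (hgauss : ∀ (a : ℝ) (b c : Fin n → ℝ),
      Measure.map (fun ω => a * fx ω + b ⬝ᵥ fX ω + c ⬝ᵥ eps ω) ℙ =
        gaussianReal 0
          (a * a * Kxx + 2 * a * (b ⬝ᵥ KxX) + b ⬝ᵥ (KXX *ᵥ b)
            + σ ^ 2 * (c ⬝ᵥ c)).toNNReal)
    (y : Fin n → ℝ) :
    Measure.map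
        (fun ω => fx ω +
          KxX ⬝ᵥ ((KXX + σ ^ 2 • (1 : Matrix (Fin n) (Fin n) ℝ))⁻¹ *ᵥ
            (y - (fX ω + eps ω)))) ℙ =
      gaussianReal
        (KxX ⬝ᵥ ((KXX + σ ^ 2 • (1 : Matrix (Fin n) (Fin n) ℝ))⁻¹ *ᵥ y))
        (Kxx - KxX ⬝ᵥ ((KXX + σ ^ 2 • (1 : Matrix (Fin n) (Fin n) ℝ))⁻¹ *ᵥ KxX)).toNNReal := by
  set M := KXX + σ ^ 2 • (1 : Matrix (Fin n) (Fin n) ℝ) with hM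
  have hMpd : M.PosDef := PosDef.posSemidef_add hKXX (PosDef.one.smul (pow_pos hσ 2))
  have hMinv : M⁻¹.IsSymm := (isHermitian_iff_isSymm.mp hMpd.isHermitian).inv
  set u := M⁻¹ *ᵥ KxX
  have hgain (v : Fin n → ℝ) : KxX ⬝ᵥ (M⁻¹ *ᵥ v) = u ⬝ᵥ v := hMinv.dotProduct_mulVec_comm KxX v
  have hsample : (fun ω => fx ω + KxX ⬝ᵥ (M⁻¹ *ᵥ (y - (fX ω + eps ω)))) =
      fun ω => (1 * fx ω + (-u) ⬝ᵥ fX ω + (-u) ⬝ᵥ eps ω) + u ⬝ᵥ y := by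
    funext ω
    rw [hgain, dotProduct_sub, dotProduct_add, neg_dotProduct, neg_dotProduct]
    ring
  have hvar : 1 * 1 * Kxx + 2 * 1 * ((-u) ⬝ᵥ KxX) + (-u) ⬝ᵥ (KXX *ᵥ (-u))
      + σ ^ 2 * ((-u) ⬝ᵥ (-u)) = Kxx - KxX ⬝ᵥ u := by
    have hquad := dotProduct_add_smul_one_mulVec KXX (σ ^ 2) u
    rw [← hM, mulVec_nonsing_inv_mulVec hMpd.isUnit] at hquad
    simp only [neg_dotProduct, dotProduct_neg, mulVec_neg, neg_neg, mul_neg]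
    linarith [dotProduct_comm KxX u]
  have hcentred := HasLaw.of_map_eq (hgauss 1 (-u) (-u))
  rw [hvar] at hcentred
  rw [hsample, (gaussianReal_add_const hcentred (u ⬝ᵥ y)).map_eq, zero_add, hgain y]

/-- Pathwise conditioning recovers the exact GP posterior at a test point `x`.
`(fx, fX, eps)` is jointly Gaussian with mean zero, covariance blocks
`Kxx` (scalar), `KxX` (cross-covariance), `KXX` (training covariance), and
independent noise `eps ~ N(0, σ²I)`; joint Gaussianity and independence are
encoded by requiring every linear functional to be Gaussian with the
corresponding variance. -/
theorem pathwise_conditioning {n : ℕ} {Ω : Type*} [MeasureSpace Ω]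
    [IsProbabilityMeasure (ℙ : Measure Ω)]
    (fx : Ω → ℝ) (fX : Ω → Fin n → ℝ) (eps : Ω → Fin n → ℝ)
    (Kxx : ℝ) (KxX : Fin n → ℝ) (KXX : Matrix (Fin n) (Fin n) ℝ)
    (hKXX : KXX.PosSemidef) (σ : ℝ) (hσ : 0 < σ)
    (hgauss : ∀ (a : ℝ) (b c : Fin n → ℝ),
      Measure.map (fun ω => a * fx ω + b ⬝ᵥ fX ω + c ⬝ᵥ eps ω) ℙ =
        gaussianReal 0
          (a * a * Kxx + 2 * a * (b ⬝ᵥ KxX) + b ⬝ᵥ (KXX *ᵥ b)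
            + σ ^ 2 * (c ⬝ᵥ c)).toNNReal)
    (y : Fin n → ℝ) :
    Measure.map
        (fun ω => fx ω +
          KxX ⬝ᵥ ((KXX + σ ^ 2 • (1 : Matrix (Fin n) (Fin n) ℝ))⁻¹ *ᵥ
            (y - (fX ω + eps ω)))) ℙ =
      gaussianReal
        (KxX ⬝ᵥ ((KXX + σ ^ 2 • (1 : Matrix (Fin n) (Fin n) ℝ))⁻¹ *ᵥ y))
        (Kxx - KxX ⬝ᵥ ((KXX + σ ^ 2 • (1 : Matrix (Fin n) (Fin n) ℝ))⁻¹ *ᵥ KxX)).toNNReal :=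
  pathwise_conditioning_general fx fX eps Kxx KxX KXX hKXX σ hσ hgauss y
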